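/- Let g be a nonnegative continuous integrable strictly increasing function on [0,a) where a = π/2 + kπ for a positive odd integer k. Then ∫₀ᵃ g(t) cos t dt < 0. -/

import Mathlib

/-!
Write `k = 2m + 1`, so that `[0, a]` splits into `[0, π]`, `[π, 3π/2]` and `m` periods starting at
`3π/2`. Reflecting `[π/2, π]` onto `[0, π/2]` turns the first integral into
`-∫₀^{π/2} (g (π - t) - g t) cos t`, which is negative because `g` is strictly increasing. On
`[π, 3π/2]` the integrand is `≤ 0` since `g ≥ 0`. On a period `[c, c + 2π]` with `cos ≥ 0` on its
first half, shifting the second half by `π` gives `-∫_c^{c+π} (g (t + π) - g t) cos t ≤ 0`.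
-/

open Real Set MeasureTheory intervalIntegral

lemma IntervalIntegrable.mono_set_of_le {E : Type*} [NormedAddCommGroup E] {f : ℝ → E}
    {μ : Measure ℝ} {a b c d : ℝ} (hf : IntervalIntegrable f μ a b) (hac : a ≤ c) (hcd : c ≤ d)
    (hdb : d ≤ b) : IntervalIntegrable f μ c d :=
  hf.mono_set <| by
    rw [uIcc_of_le hcd, uIcc_of_le (hac.trans (hcd.trans hdb))]
    exact Icc_subset_Icc hac hdb

lemma intervalIntegral_nonneg_of_forall_mem_Ioo {f : ℝ → ℝ} {a b : ℝ} (hab : a ≤ b)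
    (hf : ∀ x ∈ Ioo a b, 0 ≤ f x) : 0 ≤ ∫ x in a..b, f x := by
  rw [integral_of_le hab, integral_Ioc_eq_integral_Ioo]
  exact setIntegral_nonneg measurableSet_Ioo hf

section

variable {g : ℝ → ℝ}

lemma integral_mul_cos_zero_pi_eq (hg : IntervalIntegrable g volume 0 π) :
    ∫ t in (0 : ℝ)..π, g t * cos t = -∫ t in (0 : ℝ)..π / 2, (g (π - t) - g t) * cos t := by
  have hπ := pi_pos
  have hf : IntervalIntegrable (fun t => g t * cos t) volume 0 π :=
    hg.mul_continuousOn continuous_cos.continuousOn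
  have hleft := hf.mono_set_of_le le_rfl (by linarith) (by linarith : π / 2 ≤ π)
  have hright := hf.mono_set_of_le (by linarith : 0 ≤ π / 2) (by linarith) le_rfl
  have hrefl : IntervalIntegrable (fun t => g (π - t) * cos (π - t)) volume 0 (π / 2) := by
    simpa [show π - π / 2 = π / 2 by ring] using (hright.comp_sub_left π).symm
  calc ∫ t in (0 : ℝ)..π, g t * cos t
      = (∫ t in (0 : ℝ)..π / 2, g t * cos t) + ∫ t in π / 2..π, g t * cos t :=
        (integral_add_adjacent_intervals hleft hright).symm
    _ = (∫ t in (0 : ℝ)..π / 2, g t * cos t) + ∫ t in (0 : ℝ)..π / 2, g (π - t) * cos (π - t) := by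
        rw [integral_comp_sub_left (fun t => g t * cos t) π, sub_zero,
          show π - π / 2 = π / 2 by ring]
    _ = -∫ t in (0 : ℝ)..π / 2, (g (π - t) - g t) * cos t := by
        rw [← integral_add hleft hrefl, ← intervalIntegral.integral_neg]
        simp only [cos_pi_sub]
        congr 1 with t
        ring

lemma integral_mul_cos_zero_pi_neg (hg_mono : StrictMonoOn g (Ioo 0 π))
    (hg : IntervalIntegrable g volume 0 π) : ∫ t in (0 : ℝ)..π, g t * cos t < 0 := by
  have hπ := pi_pos
  have hleft := hg.mono_set_of_le le_rfl (by linarith) (by linarith : π / 2 ≤ π)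
  have hright : IntervalIntegrable (fun t => g (π - t)) volume 0 (π / 2) := by
    simpa [show π - π / 2 = π / 2 by ring] using
      ((hg.mono_set_of_le (by linarith : 0 ≤ π / 2) (by linarith) le_rfl).comp_sub_left π).symm
  rw [integral_mul_cos_zero_pi_eq hg, neg_neg_iff_pos]
  refine intervalIntegral_pos_of_pos_on ?_ (fun t ⟨ht0, ht⟩ => ?_) (by linarith)
  · exact (hright.sub hleft).mul_continuousOn continuous_cos.continuousOn
  · have hlt : g t < g (π - t) :=
      hg_mono ⟨ht0, by linarith⟩ ⟨by linarith, by linarith⟩ (by linarith)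
    exact mul_pos (sub_pos.2 hlt) (cos_pos_of_mem_Ioo ⟨by linarith, ht⟩)

lemma integral_mul_cos_pi_three_pi_div_two_nonpos (hg : ∀ t ∈ Ioo π (3 * π / 2), 0 ≤ g t) :
    ∫ t in π..3 * π / 2, g t * cos t ≤ 0 := by
  have hπ := pi_pos
  rw [← neg_nonneg, ← intervalIntegral.integral_neg]
  refine intervalIntegral_nonneg_of_forall_mem_Ioo (by linarith) fun t ht => ?_
  have hcos : cos t ≤ 0 :=
    cos_nonpos_of_pi_div_two_le_of_le (by linarith [ht.1]) (by linarith [ht.2])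
  exact neg_nonneg.2 (mul_nonpos_of_nonneg_of_nonpos (hg t ht) hcos)

lemma integral_mul_cos_period_eq {c : ℝ} (hg : IntervalIntegrable g volume c (c + 2 * π)) :
    ∫ t in c..c + 2 * π, g t * cos t = -∫ t in c..c + π, (g (t + π) - g t) * cos t := by
  have hπ := pi_pos
  have hf : IntervalIntegrable (fun t => g t * cos t) volume c (c + 2 * π) :=
    hg.mul_continuousOn continuous_cos.continuousOn
  have hleft := hf.mono_set_of_le le_rfl (by linarith) (by linarith : c + π ≤ c + 2 * π)
  have hright := hf.mono_set_of_le (by linarith : c ≤ c + π) (by linarith) le_rfl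
  have hshift : IntervalIntegrable (fun t => g (t + π) * cos (t + π)) volume c (c + π) := by
    simpa [show c + 2 * π - π = c + π by ring] using hright.comp_add_right π
  calc ∫ t in c..c + 2 * π, g t * cos t
      = (∫ t in c..c + π, g t * cos t) + ∫ t in c + π..c + 2 * π, g t * cos t :=
        (integral_add_adjacent_intervals hleft hright).symm
    _ = (∫ t in c..c + π, g t * cos t) + ∫ t in c..c + π, g (t + π) * cos (t + π) := by
        rw [integral_comp_add_right (fun t => g t * cos t) π, add_assoc, ← two_mul]
    _ = -∫ t in c..c + π, (g (t + π) - g t) * cos t := by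
        rw [← integral_add hleft hshift, ← intervalIntegral.integral_neg]
        simp only [cos_add_pi]
        congr 1 with t
        ring

lemma integral_mul_cos_period_nonpos {c : ℝ} (hcos : ∀ t ∈ Ioo c (c + π), 0 ≤ cos t)
    (hg_mono : MonotoneOn g (Ioo c (c + 2 * π)))
    (hg : IntervalIntegrable g volume c (c + 2 * π)) :
    ∫ t in c..c + 2 * π, g t * cos t ≤ 0 := by
  have hπ := pi_pos
  rw [integral_mul_cos_period_eq hg, neg_nonpos]
  refine intervalIntegral_nonneg_of_forall_mem_Ioo (by linarith) fun t ⟨hct, htc⟩ => ?_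
  have hle : g t ≤ g (t + π) :=
    hg_mono ⟨hct, by linarith⟩ ⟨by linarith, by linarith⟩ (by linarith)
  exact mul_nonneg (sub_nonneg.2 hle) (hcos t ⟨hct, htc⟩)

lemma integral_mul_cos_periods_nonpos {c : ℝ} (hcos : ∀ t ∈ Ioo c (c + π), 0 ≤ cos t) (m : ℕ)
    (hg_mono : MonotoneOn g (Ioo c (c + m * (2 * π))))
    (hg : IntervalIntegrable g volume c (c + m * (2 * π))) :
    ∫ t in c..c + m * (2 * π), g t * cos t ≤ 0 := by
  have hπ := pi_pos
  have hbounds {j : ℕ} (hj : j < m) :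
      c ≤ c + j * (2 * π) ∧ c + j * (2 * π) + 2 * π ≤ c + m * (2 * π) := by
    have : (j : ℝ) + 1 ≤ m := by exact_mod_cast hj
    constructor <;> nlinarith
  have hint {j : ℕ} (hj : j < m) :
      IntervalIntegrable g volume (c + j * (2 * π)) (c + j * (2 * π) + 2 * π) :=
    hg.mono_set_of_le (hbounds hj).1 (by linarith) (hbounds hj).2
  have hsplit := sum_integral_adjacent_intervals (f := fun t => g t * cos t) (μ := volume)
    (a := fun j : ℕ => c + j * (2 * π)) (n := m) fun j hj => by
      simpa [add_mul, ← add_assoc] using (hint hj).mul_continuousOn continuous_cos.continuousOn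
  simp only [Nat.cast_add, Nat.cast_one, add_mul, one_mul, ← add_assoc, Nat.cast_zero, zero_mul,
    add_zero] at hsplit
  rw [← hsplit]
  refine Finset.sum_nonpos fun j hj => ?_
  replace hj := Finset.mem_range.1 hj
  refine integral_mul_cos_period_nonpos (fun t ⟨ht, ht'⟩ => ?_)
    (hg_mono.mono (Ioo_subset_Ioo (hbounds hj).1 (hbounds hj).2)) (hint hj)
  rw [← cos_sub_nat_mul_two_pi t j]
  exact hcos _ ⟨by linarith, by linarith⟩

end

theorem integral_cos_neg_of_strict_mono_odd_general
    (a : ℝ) (k : ℕ) (hk : Odd k)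
    (g : ℝ → ℝ)
    (hg_nonneg : ∀ t ∈ Ico (0 : ℝ) a, 0 ≤ g t)
    (hg_int : IntegrableOn g (Ico 0 a))
    (hg_mono : StrictMonoOn g (Ico 0 a))
    (ha : a = π / 2 + k * π) :
    (∫ t in (0 : ℝ)..a, g t * Real.cos t) < 0 := by
  obtain ⟨m, rfl⟩ := hk
  have hπ := pi_pos
  have ha' : a = 3 * π / 2 + m * (2 * π) := by rw [ha]; push_cast; ring
  have ha_ge : 3 * π / 2 ≤ a := by rw [ha']; nlinarith [m.cast_nonneg (α := ℝ)]
  have hg_ii : IntervalIntegrable g volume 0 a :=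
    (intervalIntegrable_iff_integrableOn_Ico_of_le (by linarith)).2 hg_int
  have hf := hg_ii.mul_continuousOn continuous_cos.continuousOn
  have h_first := integral_mul_cos_zero_pi_neg
    (hg_mono.mono (Ioo_subset_Ico_self.trans (Ico_subset_Ico_right (by linarith))))
    (hg_ii.mono_set_of_le le_rfl hπ.le (by linarith))
  have h_quarter := integral_mul_cos_pi_three_pi_div_two_nonpos
    fun t ht => hg_nonneg t ⟨by linarith [ht.1], by linarith [ht.2]⟩
  have h_periods : ∫ t in 3 * π / 2..a, g t * cos t ≤ 0 := by
    have hcos (t : ℝ) (ht : t ∈ Ioo (3 * π / 2) (3 * π / 2 + π)) : 0 ≤ cos t := by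
      rw [← cos_sub_two_pi]
      exact cos_nonneg_of_neg_pi_div_two_le_of_le (by linarith [ht.1]) (by linarith [ht.2])
    rw [ha']
    refine integral_mul_cos_periods_nonpos hcos m (hg_mono.monotoneOn.mono ?_) ?_ <;> rw [← ha']
    · exact Ioo_subset_Ico_self.trans (Ico_subset_Ico_left (by linarith))
    · exact hg_ii.mono_set_of_le (by linarith) ha_ge le_rfl
  rw [← integral_add_adjacent_intervals (hf.mono_set_of_le le_rfl (by linarith) ha_ge)
      (hf.mono_set_of_le (by linarith) ha_ge le_rfl),
    ← integral_add_adjacent_intervals (hf.mono_set_of_le le_rfl hπ.le (by linarith))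
      (hf.mono_set_of_le hπ.le (by linarith) ha_ge)]
  linarith

theorem integral_cos_neg_of_strict_mono_odd
    (a : ℝ) (k : ℕ) (hk : Odd k) (hkpos : 0 < k)
    (g : ℝ → ℝ)
    (hg_nonneg : ∀ t ∈ Ico (0 : ℝ) a, 0 ≤ g t)
    (hg_cont : ContinuousOn g (Ico 0 a))
    (hg_int : IntegrableOn g (Ico 0 a))
    (hg_mono : StrictMonoOn g (Ico 0 a))
    (ha : a = π / 2 + k * π) :
    (∫ t in (0 : ℝ)..a, g t * Real.cos t) < 0 :=
  integral_cos_neg_of_strict_mono_odd_general a k hk g hg_nonneg hg_int hg_mono ha
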